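/- Existence of the IM-extended channel: for every tripartite quantum state ρ^{A_fB_fC} satisfying ρ^{A_fB_f} = ρ^{A_f} ⊗ ρ^{B_f}, and for all purifications |φ₁⟩^{A_fA} of ρ^{A_f} and |φ₂⟩^{B_fB} of ρ^{B_f}, there exists a quantum channel N^{AB→C} such that (I^{A_fB_f} ⊗ N^{AB→C})(φ₁^{A_fA} ⊗ φ₂^{B_fB}) = ρ^{A_fB_fC}. -/

import Mathlib

open Matrix Kronecker BigOperators Finset
open scoped ComplexOrder

noncomputable section

namespace QIT

abbrev Mat (A : Type) [Fintype A] : Type := Matrix A A ℂ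

/-- A quantum state: positive semidefinite with unit trace. -/
def IsState {A : Type} [Fintype A] (ρ : Mat A) : Prop := ρ.PosSemidef ∧ ρ.trace = 1

/-- A pure quantum state: a rank-one state `|v⟩⟨v|`. -/
def IsPure {A : Type} [Fintype A] (ρ : Mat A) : Prop :=
  IsState ρ ∧ ∃ v : A → ℂ, ρ = Matrix.vecMulVec v (star v)

/-- Partial trace over the second tensor factor. -/
def ptrace₂ {A B : Type} [Fintype A] [Fintype B] (ρ : Mat (A × B)) : Mat A :=
  Matrix.of fun a a' => ∑ b, ρ (a, b) (a', b)

/-- Partial trace over the first tensor factor. -/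
def ptrace₁ {A B : Type} [Fintype A] [Fintype B] (ρ : Mat (A × B)) : Mat B :=
  Matrix.of fun b b' => ∑ a, ρ (a, b) (a, b')

/-- A test (two-outcome POVM element): `0 ≤ T ≤ 1`. -/
def IsTest {A : Type} [Fintype A] [DecidableEq A] (T : Mat A) : Prop := T.PosSemidef ∧ (1 - T).PosSemidef

/-- Smooth hypothesis testing relative entropy
`D_H^ε(ρ‖σ) = -log₂ min { Tr[T σ] : 0 ≤ T ≤ 1, Tr[T ρ] ≥ 1 - ε }`. -/
def DH {A : Type} [Fintype A] [DecidableEq A] (ε : ℝ) (ρ σ : Mat A) : ℝ :=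
  - Real.logb 2
    (sInf { t : ℝ | ∃ T : Mat A, IsTest T ∧ 1 - ε ≤ ((T * ρ).trace).re ∧ t = ((T * σ).trace).re })

/-- Smooth hypothesis testing mutual information `I_H^ε(A:B)_ρ = D_H^ε(ρ^{AB}‖ρ^A ⊗ ρ^B)`. -/
def IH {A B : Type} [Fintype A] [Fintype B] [DecidableEq A] [DecidableEq B] (ε : ℝ) (ρ : Mat (A × B)) : ℝ :=
  DH ε ρ (ptrace₂ ρ ⊗ₖ ptrace₁ ρ)

/-- Max relative entropy `D_max(ρ‖σ) = inf { λ : ρ ≤ 2^λ σ }`. -/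
def Dmax {A : Type} [Fintype A] (ρ σ : Mat A) : ℝ :=
  sInf { l : ℝ | (((2 : ℝ) ^ l) • σ - ρ).PosSemidef }

/-- Max mutual information `I_max(A:B)_ρ = D_max(ρ^{AB}‖ρ^A ⊗ ρ^B)`. -/
def Imax {A B : Type} [Fintype A] [Fintype B] (ρ : Mat (A × B)) : ℝ :=
  Dmax ρ (ptrace₂ ρ ⊗ₖ ptrace₁ ρ)

/-- Trace norm of a Hermitian matrix: sum of absolute values of eigenvalues. -/
def traceNorm {A : Type} [Fintype A] [DecidableEq A] (M : Mat A) : ℝ :=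
  if h : M.IsHermitian then ∑ i, |h.eigenvalues i| else 0

/-- Smooth max mutual information: infimum of `I_max` over the ε-ball around ρ. -/
def smoothImax {A B : Type} [Fintype A] [Fintype B] [DecidableEq A] [DecidableEq B]
    (ε : ℝ) (ρ : Mat (A × B)) : ℝ :=
  sInf { l : ℝ | ∃ ρ' : Mat (A × B),
    ρ'.PosSemidef ∧ ((ρ'.trace).re ≤ 1) ∧ traceNorm (ρ' - ρ) ≤ ε ∧ l = Imax ρ' }

/-- The `(r, r')` block of a matrix on a product system. -/
def matSlice {R A : Type} [Fintype R] [Fintype A] (ρ : Mat (R × A)) (r r' : R) : Mat A :=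
  Matrix.of fun a a' => ρ (r, a) (r', a')

/-- Extension `I_R ⊗ Φ` of a map on matrices, acting trivially on the first factor. -/
def extendMap {R A B : Type} [Fintype R] [Fintype A] [Fintype B]
    (Φ : Mat A → Mat B) (ρ : Mat (R × A)) : Mat (R × B) :=
  Matrix.of fun p q => Φ (matSlice ρ p.1 q.1) p.2 q.2

/-- A quantum channel: linear, trace preserving, completely positive. -/
def IsCPTP {A B : Type} [Fintype A] [Fintype B] (Φ : Mat A → Mat B) : Prop :=
  (∀ (c : ℂ) (x y : Mat A), Φ (c • x + y) = c • Φ x + Φ y) ∧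
  (∀ x : Mat A, (Φ x).trace = x.trace) ∧
  (∀ (R : Type) [Fintype R], ∀ ρ : Mat (R × A), ρ.PosSemidef → (extendMap Φ ρ).PosSemidef)

/-- Marginal `ρ^{A_f C}` of a state on `(A_f × B_f) × C`. -/
def margAC {Af Bf C : Type} [Fintype Af] [Fintype Bf] [Fintype C]
    (ρ : Mat ((Af × Bf) × C)) : Mat (Af × C) :=
  Matrix.of fun p q => ∑ b, ρ ((p.1, b), p.2) ((q.1, b), q.2)

/-- A state on `(A_f × B_f) × C` reindexed as a state on `B_f × (A_f × C)`. -/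
def margB_AC {Af Bf C : Type} [Fintype Af] [Fintype Bf] [Fintype C]
    (ρ : Mat ((Af × Bf) × C)) : Mat (Bf × (Af × C)) :=
  Matrix.of fun p q => ρ ((p.2.1, p.1), p.2.2) ((q.2.1, q.1), q.2.2)

/-- The classical message state `ψ^{MM_A} = |M|⁻¹ ∑_m |m⟩⟨m| ⊗ |m⟩⟨m|`. -/
def msgState (M : Type) [Fintype M] [DecidableEq M] : Mat (M × M) :=
  Matrix.of fun p q => if p.1 = p.2 ∧ q = p then ((Fintype.card M : ℂ))⁻¹ else 0

/-- Reindexing: group spectator registers `(M, E_B)` and acted registers `(M_A, E_A)`. -/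
def arrange1 {M EA EB : Type} [Fintype M] [Fintype EA] [Fintype EB]
    (ξ : Mat ((M × M) × (EA × EB))) : Mat ((M × EB) × (M × EA)) :=
  Matrix.of fun p q => ξ ((p.1.1, p.2.1), (p.2.2, p.1.2)) ((q.1.1, q.2.1), (q.2.2, q.1.2))

/-- Reindexing: group spectator register `M` and acted registers `(B, E_B)`. -/
def arrange2 {M EB B : Type} [Fintype M] [Fintype EB] [Fintype B]
    (ξ : Mat ((M × EB) × B)) : Mat (M × (B × EB)) :=
  Matrix.of fun p q => ξ ((p.1, p.2.2), p.2.1) ((q.1, q.2.2), q.2.1)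

/-- The global state after the encoder of an entanglement-assisted protocol acts. -/
def encodedState {M EA EB A : Type} [Fintype M] [DecidableEq M] [Fintype EA] [Fintype EB]
    [Fintype A] (φ : Mat (EA × EB)) (Enc : Mat (M × EA) → Mat A) : Mat ((M × EB) × A) :=
  extendMap Enc (arrange1 (msgState M ⊗ₖ φ))

/-- The channel-input state of a protocol, averaged over all messages. -/
def channelInput {M EA EB A : Type} [Fintype M] [DecidableEq M] [Fintype EA] [Fintype EB]
    [Fintype A] (φ : Mat (EA × EB)) (Enc : Mat (M × EA) → Mat A) : Mat A :=
  ptrace₁ (encodedState φ Enc)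

/-- The final classical state `(D ∘ N ∘ E)(ψ^{MM_A} ⊗ φ^{E_AE_B})` of a protocol. -/
def finalState {M EA EB A B : Type} [Fintype M] [DecidableEq M] [Fintype EA] [Fintype EB]
    [Fintype A] [Fintype B] (N : Mat A → Mat B) (φ : Mat (EA × EB))
    (Enc : Mat (M × EA) → Mat A) (Dec : Mat (B × EB) → Mat M) : Mat (M × M) :=
  extendMap Dec (arrange2 (extendMap N (encodedState φ Enc)))

/-- Swap the two factors of a bipartite system. -/
def swap12 {A B : Type} [Fintype A] [Fintype B] (ρ : Mat (A × B)) : Mat (B × A) :=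
  Matrix.of fun p q => ρ (p.2, p.1) (q.2, q.1)

/-- Apply a real function to a Hermitian matrix via the spectral decomposition. -/
def herFun {A : Type} [Fintype A] [DecidableEq A] (f : ℝ → ℝ) (M : Mat A) : Mat A :=
  if h : M.IsHermitian then h.cfc f else 0

/-- (Pseudo-)inverse square root of a positive semidefinite matrix. -/
def invSqrt {A : Type} [Fintype A] [DecidableEq A] (M : Mat A) : Mat A :=
  herFun (fun x => Real.sqrt x⁻¹) M

/-- Square root of a positive semidefinite matrix. -/
def matSqrt {A : Type} [Fintype A] [DecidableEq A] (M : Mat A) : Mat A :=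
  herFun Real.sqrt M

/-- The pretty good measurement built from the operators `Λ`. -/
def pgm {I X : Type} [Fintype I] [Fintype X] [DecidableEq X] (Λ : I → Mat X) (m : I) : Mat X :=
  invSqrt (∑ i, Λ i) * Λ m * invSqrt (∑ i, Λ i)

/-- Conjugation `X ρ X†` acting on the first tensor factor. -/
def conjFirst {S T : Type} [Fintype S] [Fintype T] (X : Mat S) (ρ : Mat (S × T)) :
    Mat (S × T) :=
  Matrix.of fun p q => ∑ s, ∑ t, X p.1 s * ρ (s, p.2) (t, q.2) * star (X q.1 t)

end QIT

open QIT

/-- Reindex a state on `(A_f × A) × (B_f × B)` as a state on `(A_f × B_f) × (A × B)`. -/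
def pairSwap {Af A Bf B : Type} [Fintype Af] [Fintype A] [Fintype Bf] [Fintype B]
    (ξ : Mat ((Af × A) × (Bf × B))) : Mat ((Af × Bf) × (A × B)) :=
  Matrix.of fun p q =>
    ξ ((p.1.1, p.2.1), (p.1.2, p.2.2)) ((q.1.1, q.2.1), (q.1.2, q.2.2))

/-!
Vectorising, write `φ₁ ⊗ φ₂ = |vec U⟩⟨vec U|` with `U = M₁ ⊗ M₂`, and decompose
`ρ = ∑ₖ |vec Lₖ⟩⟨vec Lₖ|`. The reduced state on `A_fB_f` of `|vec M⟩⟨vec M|` is `(Mᴴ M)ᵀ`, so the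
independence condition and the purification conditions say exactly `∑ₖ Lₖᴴ Lₖ = Uᴴ U`. Two
factorisations of the same Gram matrix `G` differ by a partial isometry: `Eₖ = Lₖ G⁺ Uᴴ` satisfies
`Eₖ U = Lₖ`, and `∑ₖ Eₖᴴ Eₖ` is the projection onto the range of `U`. Completing the Kraus family
`(Eₖ)` on the orthogonal complement gives a channel `N` with `N (U X Uᴴ) = ∑ₖ Lₖ X Lₖᴴ`, which is
`(I ⊗ N)(φ₁ ⊗ φ₂) = ρ` read block by block.
-/

namespace QIT

section Kraus

variable {ι A B : Type} [Fintype ι] [Fintype A] [Fintype B]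

def krausMap (K : ι → Matrix B A ℂ) (X : Mat A) : Mat B := ∑ i, K i * X * (K i)ᴴ

lemma extendMap_krausMap {R : Type} [Fintype R] [DecidableEq R] (K : ι → Matrix B A ℂ)
    (ρ : Mat (R × A)) :
    extendMap (krausMap K) ρ = krausMap (fun i => (1 : Mat R) ⊗ₖ K i) ρ := by
  ext ⟨r, b⟩ ⟨r', b'⟩
  simp [extendMap, krausMap, matSlice, Matrix.sum_apply, Matrix.mul_apply, Fintype.sum_prod_type,
    one_apply, ite_mul, apply_ite (starRingEnd ℂ), mul_ite]

lemma isCPTP_krausMap [DecidableEq A] (K : ι → Matrix B A ℂ) (hK : ∑ i, (K i)ᴴ * K i = 1) :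
    IsCPTP (krausMap K) := by
  refine ⟨fun c X Y => ?_, fun X => ?_, fun R _ ρ hρ => ?_⟩
  · simp only [krausMap, Matrix.mul_add, Matrix.add_mul, Matrix.mul_smul, Matrix.smul_mul,
      Finset.sum_add_distrib, Finset.smul_sum]
  · calc (krausMap K X).trace = ∑ i, ((K i)ᴴ * K i * X).trace := by
          simp only [krausMap, trace_sum]
          exact Finset.sum_congr rfl fun i _ => trace_mul_cycle _ _ _
      _ = X.trace := by rw [← trace_sum, ← Finset.sum_mul, hK, one_mul]
  · classical
    rw [extendMap_krausMap]
    exact posSemidef_sum _ fun i _ => hρ.mul_mul_conjTranspose_same _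

end Kraus

section PseudoInverse

open scoped MatrixOrder

variable {n : Type} [Fintype n] [DecidableEq n]

/-- Inverts the nonzero eigenvalues of a Hermitian matrix and keeps its kernel (`0⁻¹ = 0`). -/
def pinv (G : Mat n) : Mat n := cfc (·⁻¹ : ℝ → ℝ) G

lemma isSelfAdjoint_pinv (G : Mat n) : IsSelfAdjoint (pinv G) := cfc_predicate _ _

lemma cfc_mul_cfc_mul_cfc (G : Mat n) (f g h : ℝ → ℝ) :
    cfc f G * cfc g G * cfc h G = cfc (fun x => f x * g x * h x) G := by
  have hcont : ∀ k : ℝ → ℝ, ContinuousOn k (spectrum ℝ G) := fun k =>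
    Matrix.finite_real_spectrum.continuousOn k
  rw [← cfc_mul _ _ G (hcont _) (hcont _), ← cfc_mul _ _ G (hcont _) (hcont _)]

lemma mul_pinv_mul_self {G : Mat n} (hG : IsSelfAdjoint G) : G * pinv G * G = G := by
  have h := cfc_mul_cfc_mul_cfc G (fun x => x) (·⁻¹) (fun x => x)
  simp only [cfc_id' ℝ G, mul_inv_mul_cancel] at h
  exact h

lemma pinv_mul_self_mul_pinv {G : Mat n} (hG : IsSelfAdjoint G) :
    pinv G * G * pinv G = pinv G := by
  have h := cfc_mul_cfc_mul_cfc G (·⁻¹) (fun x => x) (·⁻¹)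
  have hinv : ∀ x : ℝ, x⁻¹ * x * x⁻¹ = x⁻¹ := fun x => by simpa using mul_inv_mul_cancel x⁻¹
  simp only [cfc_id' ℝ G, hinv] at h
  exact h

/-- With `c = 1 - G⁺ G` one has `(M c)ᴴ (M c) ≤ cᴴ G c = 0`. -/
lemma mul_pinv_mul_eq_self_of_le {m : Type} [Fintype m] {G : Mat n} (hG : IsSelfAdjoint G)
    (M : Matrix m n ℂ) (hM : Mᴴ * M ≤ G) : M * pinv G * G = M := by
  set c := 1 - pinv G * G
  have hGc : G * c = 0 := by rw [mul_sub, mul_one, ← mul_assoc, mul_pinv_mul_self hG, sub_self]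
  have h0 : (M * c)ᴴ * (M * c) = 0 := by
    refine le_antisymm ?_ (posSemidef_conjTranspose_mul_self _).nonneg
    calc (M * c)ᴴ * (M * c) = star c * (Mᴴ * M) * c := by
          simp only [star_eq_conjTranspose, conjTranspose_mul, Matrix.mul_assoc]
      _ ≤ star c * G * c := star_left_conjugate_le_conjugate hM c
      _ = 0 := by rw [mul_assoc, hGc, mul_zero]
  have h := conjTranspose_mul_self_eq_zero.mp h0
  rw [Matrix.mul_sub, Matrix.mul_one, sub_eq_zero] at h
  rw [Matrix.mul_assoc]
  exact h.symm

end PseudoInverse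

/-- The defect `1 - P` is measured by the extra Kraus operators `|c₀⟩⟨j| (1 - P)`, which
prepare the fixed state `|c₀⟩⟨c₀|`. -/
lemma exists_isCPTP_eq_krausMap {ι C D : Type} [Fintype ι] [Fintype C] [Fintype D]
    [DecidableEq D] [Nonempty C] (E : ι → Matrix C D ℂ)
    (hE : IsStarProjection (∑ i, (E i)ᴴ * E i)) :
    ∃ N : Mat D → Mat C, IsCPTP N ∧
      ∀ X, (1 - ∑ i, (E i)ᴴ * E i) * X = 0 → N X = krausMap E X := by
  classical
  obtain ⟨c₀⟩ := ‹Nonempty C›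
  set P := ∑ i, (E i)ᴴ * E i
  have hQ : IsStarProjection (1 - P) := hE.one_sub
  let F : D → Matrix C D ℂ := fun j => single c₀ j (1 : ℂ) * (1 - P)
  have hF : ∑ j, (F j)ᴴ * F j = 1 - P := by
    calc ∑ j, (F j)ᴴ * F j = ∑ j, (1 - P)ᴴ * single j j 1 * (1 - P) := by
          refine Finset.sum_congr rfl fun j _ => ?_
          simp only [F, conjTranspose_mul, conjTranspose_single, star_one, Matrix.mul_assoc,
            ← Matrix.mul_assoc (single j c₀ (1 : ℂ)), single_mul_single_same, mul_one]
      _ = 1 - P := by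
          rw [← Finset.sum_mul, ← Finset.mul_sum, sum_single_one, mul_one,
            ← star_eq_conjTranspose, hQ.isSelfAdjoint.star_eq, hQ.isIdempotentElem.eq]
  have hK : ∑ i, (Sum.elim E F i)ᴴ * Sum.elim E F i = 1 := by
    simp only [Fintype.sum_sum_type, Sum.elim_inl, Sum.elim_inr, hF]
    exact add_sub_cancel P 1
  refine ⟨krausMap (Sum.elim E F), isCPTP_krausMap _ hK, fun X hX => ?_⟩
  have hFX : ∀ j, F j * X * (F j)ᴴ = 0 := fun j => by
    rw [Matrix.mul_assoc (single c₀ j 1) (1 - P) X, hX, Matrix.mul_zero, Matrix.zero_mul]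
  simp only [krausMap, Fintype.sum_sum_type, Sum.elim_inl, Sum.elim_inr, hFX,
    Finset.sum_const_zero, add_zero]

open scoped MatrixOrder in
theorem exists_isCPTP_conj_eq_krausMap {ι C D F : Type} [Fintype ι] [Fintype C] [Fintype D]
    [Fintype F] [Nonempty C] (U : Matrix D F ℂ) (L : ι → Matrix C F ℂ)
    (hL : ∑ i, (L i)ᴴ * L i = Uᴴ * U) :
    ∃ N : Mat D → Mat C, IsCPTP N ∧ ∀ X, N (U * X * Uᴴ) = krausMap L X := by
  classical
  set G := Uᴴ * U
  have hG : IsSelfAdjoint G := (posSemidef_conjTranspose_mul_self U).isHermitian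
  have hpinv : (pinv G)ᴴ = pinv G := isSelfAdjoint_pinv G
  have hU : U * pinv G * G = U := mul_pinv_mul_eq_self_of_le hG U le_rfl
  have hL' : ∀ i, L i * pinv G * G = L i := fun i =>
    mul_pinv_mul_eq_self_of_le hG _ <| hL ▸ Finset.single_le_sum
      (fun j _ => (posSemidef_conjTranspose_mul_self (L j)).nonneg) (Finset.mem_univ i)
  set E : ι → Matrix C D ℂ := fun i => L i * pinv G * Uᴴ
  have hEU : ∀ i, E i * U = L i := fun i => by
    simp only [E, Matrix.mul_assoc] at hL' ⊢
    exact hL' i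
  have hP : ∑ i, (E i)ᴴ * E i = U * pinv G * Uᴴ := by
    calc ∑ i, (E i)ᴴ * E i = U * pinv G * (∑ i, (L i)ᴴ * L i) * pinv G * Uᴴ := by
          simp only [E, conjTranspose_mul, conjTranspose_conjTranspose, hpinv, Matrix.sum_mul,
            Matrix.mul_sum, Matrix.mul_assoc]
      _ = U * pinv G * Uᴴ := by
          rw [hL, Matrix.mul_assoc U, Matrix.mul_assoc U, pinv_mul_self_mul_pinv hG]
  have hPU : U * pinv G * Uᴴ * U = U := by rw [Matrix.mul_assoc, hU]
  have hproj : IsStarProjection (U * pinv G * Uᴴ) := by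
    refine ⟨?_, ?_⟩
    · show U * pinv G * Uᴴ * (U * pinv G * Uᴴ) = U * pinv G * Uᴴ
      rw [← Matrix.mul_assoc _ (U * pinv G), ← Matrix.mul_assoc _ U, hPU]
    · show (U * pinv G * Uᴴ)ᴴ = U * pinv G * Uᴴ
      rw [conjTranspose_mul, conjTranspose_mul, conjTranspose_conjTranspose, hpinv,
        Matrix.mul_assoc]
  obtain ⟨N, hN, hNE⟩ := exists_isCPTP_eq_krausMap E (hP ▸ hproj)
  refine ⟨N, hN, fun X => ?_⟩
  rw [hNE _ ?_]
  · have hEUX : ∀ i, E i * (U * X * Uᴴ) * (E i)ᴴ = L i * X * (L i)ᴴ := fun i => by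
      calc E i * (U * X * Uᴴ) * (E i)ᴴ = E i * U * X * (E i * U)ᴴ := by
            simp only [conjTranspose_mul, Matrix.mul_assoc]
        _ = L i * X * (L i)ᴴ := by rw [hEU]
    simp only [krausMap, hEUX]
  · rw [hP, Matrix.sub_mul, Matrix.one_mul, ← Matrix.mul_assoc, ← Matrix.mul_assoc, hPU, sub_self]

section States

variable {F C : Type} [Fintype F] [Fintype C]

lemma IsState.nonempty {ρ : Mat F} (hρ : IsState ρ) : Nonempty F := by
  by_contra h
  rw [not_nonempty_iff] at h
  simpa [Matrix.trace] using hρ.2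

open scoped MatrixOrder in
lemma _root_.Matrix.PosSemidef.exists_eq_sum_vecMulVec {ρ : Mat F} (hρ : ρ.PosSemidef) :
    ∃ y : F → F → ℂ, ρ = ∑ k, vecMulVec (y k) (star (y k)) := by
  classical
  obtain ⟨W, rfl⟩ := CStarAlgebra.nonneg_iff_eq_star_mul_self.mp hρ.nonneg
  refine ⟨fun k => star (W k), ?_⟩
  ext p q
  simp [Matrix.mul_apply, Matrix.sum_apply, vecMulVec_apply]

lemma ptrace₂_sum {ι : Type} (s : Finset ι) (ρ : ι → Mat (F × C)) :
    ptrace₂ (∑ i ∈ s, ρ i) = ∑ i ∈ s, ptrace₂ (ρ i) := by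
  ext f f'
  simp only [ptrace₂, Matrix.of_apply, Matrix.sum_apply]
  exact Finset.sum_comm

lemma ptrace₂_vecMulVec_vec (M : Matrix C F ℂ) :
    ptrace₂ (vecMulVec (vec M) (star (vec M))) = (Mᴴ * M)ᵀ := by
  ext f f'
  simp [ptrace₂, Matrix.mul_apply, vecMulVec_apply, mul_comm]

lemma matSlice_vecMulVec_vec [DecidableEq F] (M : Matrix C F ℂ) (f f' : F) :
    matSlice (vecMulVec (vec M) (star (vec M))) f f' = M * single f f' (1 : ℂ) * Mᴴ := by
  ext c c'
  simp [matSlice, Matrix.mul_apply, vecMulVec_apply, single_apply, ite_and]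

lemma extendMap_vecMulVec_vec {ι D : Type} [Fintype ι] [Fintype D]
    {N : Mat D → Mat C} {U : Matrix D F ℂ} {L : ι → Matrix C F ℂ}
    (hN : ∀ X, N (U * X * Uᴴ) = krausMap L X) :
    extendMap N (vecMulVec (vec U) (star (vec U)))
      = ∑ k, vecMulVec (vec (L k)) (star (vec (L k))) := by
  classical
  ext ⟨f, c⟩ ⟨f', c'⟩
  rw [Matrix.sum_apply]
  show N (matSlice _ f f') c c' = ∑ k, matSlice (vecMulVec (vec (L k)) _) f f' c c'
  simp only [matSlice_vecMulVec_vec, hN, krausMap, Matrix.sum_apply]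

end States

end QIT

section PairSwap

variable {Af A Bf B : Type} [Fintype Af] [Fintype A] [Fintype Bf] [Fintype B]

lemma ptrace₂_pairSwap_kronecker (φ₁ : Mat (Af × A)) (φ₂ : Mat (Bf × B)) :
    ptrace₂ (pairSwap (φ₁ ⊗ₖ φ₂)) = ptrace₂ φ₁ ⊗ₖ ptrace₂ φ₂ := by
  ext ⟨a, b⟩ ⟨a', b'⟩
  simp [ptrace₂, pairSwap, Fintype.sum_prod_type, Finset.sum_mul_sum]

lemma pairSwap_kronecker_vecMulVec_vec (M₁ : Matrix A Af ℂ) (M₂ : Matrix B Bf ℂ) :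
    pairSwap (vecMulVec (vec M₁) (star (vec M₁)) ⊗ₖ vecMulVec (vec M₂) (star (vec M₂)))
      = vecMulVec (vec (M₁ ⊗ₖ M₂)) (star (vec (M₁ ⊗ₖ M₂))) := by
  ext p q
  simp only [pairSwap, Matrix.of_apply, kroneckerMap_apply, vecMulVec_apply, vec, Pi.star_apply,
    star_mul']
  ring

end PairSwap

theorem IM_extended_channel_exists_general
    (Af Bf C A B : Type) [Fintype Af] [Fintype Bf] [Fintype C] [Fintype A] [Fintype B]
    (ρ : Mat ((Af × Bf) × C)) (hρ : IsState ρ)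
    (hIM : ptrace₂ ρ = ptrace₂ (ptrace₂ ρ) ⊗ₖ ptrace₁ (ptrace₂ ρ))
    (φ₁ : Mat (Af × A)) (hφ₁ : IsPure φ₁) (hφ₁m : ptrace₂ φ₁ = ptrace₂ (ptrace₂ ρ))
    (φ₂ : Mat (Bf × B)) (hφ₂ : IsPure φ₂) (hφ₂m : ptrace₂ φ₂ = ptrace₁ (ptrace₂ ρ)) :
    ∃ N : Mat (A × B) → Mat C, IsCPTP N ∧ extendMap N (pairSwap (φ₁ ⊗ₖ φ₂)) = ρ := by
  have hmarg : ptrace₂ ρ = ptrace₂ (pairSwap (φ₁ ⊗ₖ φ₂)) := by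
    rw [ptrace₂_pairSwap_kronecker, hφ₁m, hφ₂m, ← hIM]
  have : Nonempty C := hρ.nonempty.map Prod.snd
  obtain ⟨-, v₁, rfl⟩ := hφ₁
  obtain ⟨-, v₂, rfl⟩ := hφ₂
  obtain ⟨M₁, rfl⟩ := vec_bijective.surjective v₁
  obtain ⟨M₂, rfl⟩ := vec_bijective.surjective v₂
  obtain ⟨y, rfl⟩ := hρ.1.exists_eq_sum_vecMulVec
  obtain ⟨L, rfl⟩ := vec_bijective.surjective.comp_left y
  rw [pairSwap_kronecker_vecMulVec_vec] at hmarg ⊢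
  have hgram : ∑ k, (L k)ᴴ * L k = (M₁ ⊗ₖ M₂)ᴴ * (M₁ ⊗ₖ M₂) := transpose_injective <| by
    simpa only [ptrace₂_sum, ptrace₂_vecMulVec_vec, transpose_sum, Function.comp_apply] using hmarg
  obtain ⟨N, hN, hNL⟩ := exists_isCPTP_conj_eq_krausMap (M₁ ⊗ₖ M₂) L hgram
  exact ⟨N, hN, extendMap_vecMulVec_vec hNL⟩

/-- Existence of the IM-extended channel: for every tripartite state
`ρ^{A_fB_fC}` with `ρ^{A_fB_f} = ρ^{A_f} ⊗ ρ^{B_f}` and all purifications `φ₁^{A_fA}` of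
`ρ^{A_f}` and `φ₂^{B_fB}` of `ρ^{B_f}`, there is a channel `N^{AB→C}` with
`(I ⊗ N)(φ₁ ⊗ φ₂) = ρ`. -/
theorem IM_extended_channel_exists
    (Af Bf C A B : Type) [Fintype Af] [Fintype Bf] [Fintype C] [Fintype A] [Fintype B]
    [DecidableEq Af] [DecidableEq Bf] [DecidableEq C] [DecidableEq A] [DecidableEq B]
    (ρ : Mat ((Af × Bf) × C)) (hρ : IsState ρ)
    (hIM : ptrace₂ ρ = ptrace₂ (ptrace₂ ρ) ⊗ₖ ptrace₁ (ptrace₂ ρ))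
    (φ₁ : Mat (Af × A)) (hφ₁ : IsPure φ₁) (hφ₁m : ptrace₂ φ₁ = ptrace₂ (ptrace₂ ρ))
    (φ₂ : Mat (Bf × B)) (hφ₂ : IsPure φ₂) (hφ₂m : ptrace₂ φ₂ = ptrace₁ (ptrace₂ ρ)) :
    ∃ N : Mat (A × B) → Mat C, IsCPTP N ∧ extendMap N (pairSwap (φ₁ ⊗ₖ φ₂)) = ρ :=
  IM_extended_channel_exists_general Af Bf C A B ρ hρ hIM φ₁ hφ₁ hφ₁m φ₂ hφ₂ hφ₂m
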